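/- Let f_{1,∞} be a commutative, finitely generated family of continuous surjections on a compact metric space X with more than one point. If (X, f_{1,∞}) is weakly mixing, then it is thickly sensitive: there exists δ > 0 such that for every non-empty open U ⊆ X, the set N(U, δ) = {n : ∃ x, y ∈ U with d(f_1^n(x), f_1^n(y)) > δ} contains arbitrarily long runs of consecutive integers. -/

import Mathlib

open Set Filter MeasureTheory TopologicalSpace

/-- `iterN f n = f_{n-1} ∘ ⋯ ∘ f_0`, the `n`-th iterate of the non-autonomous system. -/
def iterN {X : Type*} (f : ℕ → X → X) : ℕ → X → X
  | 0 => id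
  | n + 1 => f n ∘ iterN f n

/-- Topological transitivity of a non-autonomous system. -/
def NATransitive {X : Type*} [TopologicalSpace X] (f : ℕ → X → X) : Prop :=
  ∀ U V : Set X, IsOpen U → IsOpen V → U.Nonempty → V.Nonempty →
    ∃ n : ℕ, 0 < n ∧ (iterN f n '' U ∩ V).Nonempty

/-- Weak mixing (order 2). -/
def NAWeaklyMixing {X : Type*} [TopologicalSpace X] (f : ℕ → X → X) : Prop :=
  ∀ U₁ U₂ V₁ V₂ : Set X, IsOpen U₁ → IsOpen U₂ → IsOpen V₁ → IsOpen V₂ →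
    U₁.Nonempty → U₂.Nonempty → V₁.Nonempty → V₂.Nonempty →
    ∃ n : ℕ, 0 < n ∧ (iterN f n '' U₁ ∩ V₁).Nonempty ∧ (iterN f n '' U₂ ∩ V₂).Nonempty

/-- Weak mixing of order `m`. -/
def NAWeaklyMixingOrder {X : Type*} [TopologicalSpace X] (f : ℕ → X → X) (m : ℕ) : Prop :=
  ∀ U V : Fin m → Set X, (∀ i, IsOpen (U i)) → (∀ i, IsOpen (V i)) →
    (∀ i, (U i).Nonempty) → (∀ i, (V i).Nonempty) →
    ∃ n : ℕ, 0 < n ∧ ∀ i, (iterN f n '' U i ∩ V i).Nonempty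

/-- Banks's condition. -/
def NABanks {X : Type*} [TopologicalSpace X] (f : ℕ → X → X) : Prop :=
  ∀ U V W : Set X, IsOpen U → IsOpen V → IsOpen W →
    U.Nonempty → V.Nonempty → W.Nonempty →
    ∃ n : ℕ, 0 < n ∧ (iterN f n '' U ∩ V).Nonempty ∧ (iterN f n '' U ∩ W).Nonempty

/-- Topological mixing. -/
def NAMixing {X : Type*} [TopologicalSpace X] (f : ℕ → X → X) : Prop :=
  ∀ U V : Set X, IsOpen U → IsOpen V → U.Nonempty → V.Nonempty →
    ∃ N : ℕ, ∀ n ≥ N, (iterN f n '' U ∩ V).Nonempty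

/-- `blockC f s k = f_{s+k-1} ∘ ⋯ ∘ f_s`. -/
def blockC {X : Type*} (f : ℕ → X → X) (s k : ℕ) : X → X :=
  iterN (fun i => f (s + i)) k

/-- The `k`-th iterate system `f_{1,∞}^{[k]}`. -/
def kthSys {X : Type*} (f : ℕ → X → X) (k : ℕ) : ℕ → X → X :=
  fun n => blockC f (n * k) k

/-- The induced non-autonomous system on Borel probability measures (pushforwards). -/
noncomputable def inducedM {X : Type*} [MeasurableSpace X] [TopologicalSpace X]
    [BorelSpace X] (f : ℕ → X → X) (hf : ∀ n, Continuous (f n)) :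
    ℕ → ProbabilityMeasure X → ProbabilityMeasure X :=
  fun n μ => μ.map ((hf n).measurable.aemeasurable)

/-- The induced non-autonomous system on the hyperspace of non-empty compact subsets. -/
def inducedK {X : Type*} [TopologicalSpace X] (f : ℕ → X → X) (hf : ∀ n, Continuous (f n)) :
    ℕ → NonemptyCompacts X → NonemptyCompacts X :=
  fun n K => ⟨⟨f n '' (K : Set X), K.isCompact.image (hf n)⟩, K.nonempty.image _⟩

/-- The set `N(U, δ)` of sensitivity times. -/
def NSet {X : Type*} [PseudoMetricSpace X] (f : ℕ → X → X) (U : Set X) (δ : ℝ) : Set ℕ :=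
  {n | 0 < n ∧ ∃ x ∈ U, ∃ y ∈ U, δ < dist (iterN f n x) (iterN f n y)}

/-- Sensitive dependence on initial conditions. -/
def NASensitive {X : Type*} [PseudoMetricSpace X] (f : ℕ → X → X) : Prop :=
  ∃ δ : ℝ, 0 < δ ∧ ∀ x : X, ∀ U : Set X, IsOpen U → x ∈ U →
    ∃ y ∈ U, ∃ n : ℕ, 0 < n ∧ δ < dist (iterN f n x) (iterN f n y)

/-- A thick subset of ℕ. -/
def ThickSet (S : Set ℕ) : Prop := ∀ p : ℕ, ∃ n : ℕ, ∀ j ≤ p, n + j ∈ S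

/-- A syndetic subset of ℕ. -/
def SyndeticSet (S : Set ℕ) : Prop := ∃ a : ℕ, ∀ i : ℕ, ∃ j, i ≤ j ∧ j ≤ i + a ∧ j ∈ S

/-- Upper density of a subset of ℕ. -/
noncomputable def upperDens (S : Set ℕ) : ℝ :=
  Filter.limsup (fun n : ℕ => (Nat.card ↥(S ∩ Set.Iio n) : ℝ) / n) Filter.atTop

/-- Periodic point of a non-autonomous system. -/
def NAPeriodicPt {X : Type*} (f : ℕ → X → X) (x : X) : Prop :=
  ∃ n : ℕ, 0 < n ∧ ∀ k : ℕ, 0 < k → iterN f (n * k) x = x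


/-!
Fix `a ≠ b` and `δ = d(a, b)/3`. Commutativity upgrades weak mixing to hitting any finite
family of open pairs simultaneously. Finite generation leaves only finitely many block maps
`f_{n+j-1} ∘ ⋯ ∘ f_n` with `j ≤ p`, all continuous and onto, so a single time `n` sends
points of `U` into `g⁻¹(B(a, δ))` and into `g⁻¹(B(b, δ))` for every such block `g`; at the
times `n, …, n + p` the two orbits are then more than `δ` apart.
-/

section Iterates

variable {X : Type*} (f : ℕ → X → X)

theorem iterN_add (n k : ℕ) : iterN f (n + k) = blockC f n k ∘ iterN f n := by
  induction k with
  | zero => rfl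
  | succ k ih => exact congrArg (f (n + k) ∘ ·) ih

theorem continuous_iterN [TopologicalSpace X] (hf : ∀ n, Continuous (f n)) (n : ℕ) :
    Continuous (iterN f n) := by
  induction n with
  | zero => exact continuous_id
  | succ n ih => exact (hf n).comp ih

theorem iterN_surjective (hf : ∀ n, Function.Surjective (f n)) (n : ℕ) :
    Function.Surjective (iterN f n) := by
  induction n with
  | zero => exact Function.surjective_id
  | succ n ih => exact (hf n).comp ih

theorem iterN_commute (hc : ∀ i j, f i ∘ f j = f j ∘ f i) (m n : ℕ) :
    Function.Commute (iterN f m) (iterN f n) := by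
  have hcomm : ∀ i n, Function.Commute (f i) (iterN f n) := by
    intro i n
    induction n with
    | zero => exact Function.Commute.id_right
    | succ n ih => exact Function.Commute.comp_right (congrFun (hc i n)) ih
  induction m with
  | zero => exact Function.Commute.id_left
  | succ m ih => exact (hcomm m n).comp_left ih

theorem finite_range_blockC {S : Set (X → X)} (hS : S.Finite) (hfS : ∀ n, f n ∈ S) (k : ℕ) :
    (range fun n => blockC f n k).Finite := by
  induction k with
  | zero => exact (finite_singleton id).subset (by rintro _ ⟨n, rfl⟩; rfl)
  | succ k ih =>
    refine (hS.image2 (· ∘ ·) ih).subset ?_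
    rintro _ ⟨n, rfl⟩
    exact ⟨f (n + k), hfS _, blockC f n k, ⟨n, rfl⟩, rfl⟩

end Iterates

namespace NAWeaklyMixing

variable {X : Type*} [TopologicalSpace X] {f : ℕ → X → X}

/-- The extra pair `(U₀, V₀)` is what makes the induction go through: the pair added at the
inductive step is merged into it. -/
theorem exists_inter_preimage_nonempty_and_forall_finset (h : NAWeaklyMixing f)
    (hf : ∀ n, Continuous (f n)) (hc : ∀ i j, f i ∘ f j = f j ∘ f i) {ι : Type*}
    (s : Finset ι) (U V : ι → Set X) (hUo : ∀ i ∈ s, IsOpen (U i))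
    (hVo : ∀ i ∈ s, IsOpen (V i)) (hUne : ∀ i ∈ s, (U i).Nonempty)
    (hVne : ∀ i ∈ s, (V i).Nonempty) :
    ∀ U₀ V₀ : Set X, IsOpen U₀ → IsOpen V₀ → U₀.Nonempty → V₀.Nonempty →
      ∃ n, 0 < n ∧ (U₀ ∩ iterN f n ⁻¹' V₀).Nonempty ∧
        ∀ i ∈ s, (U i ∩ iterN f n ⁻¹' V i).Nonempty := by
  classical
  induction s using Finset.induction_on with
  | empty =>
    intro U₀ V₀ hU₀ hV₀ hU₀ne hV₀ne
    obtain ⟨n, hn, hne, -⟩ := h U₀ U₀ V₀ V₀ hU₀ hU₀ hV₀ hV₀ hU₀ne hU₀ne hV₀ne hV₀ne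
    exact ⟨n, hn, image_inter_nonempty_iff.1 hne, by simp⟩
  | insert i s _ ih =>
    intro U₀ V₀ hU₀ hV₀ hU₀ne hV₀ne
    obtain ⟨m, -, hUm, hVm⟩ := h U₀ V₀ (U i) (V i) hU₀ hV₀ (hUo i (by simp)) (hVo i (by simp))
      hU₀ne hV₀ne (hUne i (by simp)) (hVne i (by simp))
    have hcont := continuous_iterN f hf m
    obtain ⟨n, hn, ⟨x, ⟨hxU₀, hxUi⟩, hxV₀, hxVi⟩, hs⟩ :=
      ih (fun j hj => hUo j (by simp [hj])) (fun j hj => hVo j (by simp [hj]))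
        (fun j hj => hUne j (by simp [hj])) (fun j hj => hVne j (by simp [hj]))
        (U₀ ∩ iterN f m ⁻¹' U i) (V₀ ∩ iterN f m ⁻¹' V i)
        (hU₀.inter ((hUo i (by simp)).preimage hcont))
        (hV₀.inter ((hVo i (by simp)).preimage hcont))
        (image_inter_nonempty_iff.1 hUm) (image_inter_nonempty_iff.1 hVm)
    refine ⟨n, hn, ⟨x, hxU₀, hxV₀⟩, (Finset.forall_mem_insert _ _ _).2 ⟨?_, hs⟩⟩
    refine ⟨iterN f m x, hxUi, ?_⟩
    rwa [mem_preimage, iterN_commute f hc n m x]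

theorem exists_forall_finset_inter_preimage_nonempty [Nonempty X] (h : NAWeaklyMixing f)
    (hf : ∀ n, Continuous (f n)) (hc : ∀ i j, f i ∘ f j = f j ∘ f i) {ι : Type*}
    (s : Finset ι) (U V : ι → Set X) (hUo : ∀ i ∈ s, IsOpen (U i))
    (hVo : ∀ i ∈ s, IsOpen (V i)) (hUne : ∀ i ∈ s, (U i).Nonempty)
    (hVne : ∀ i ∈ s, (V i).Nonempty) :
    ∃ n, 0 < n ∧ ∀ i ∈ s, (U i ∩ iterN f n ⁻¹' V i).Nonempty := by
  obtain ⟨n, hn, -, hs⟩ := h.exists_inter_preimage_nonempty_and_forall_finset hf hc s U V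
    hUo hVo hUne hVne univ univ isOpen_univ isOpen_univ univ_nonempty univ_nonempty
  exact ⟨n, hn, hs⟩

end NAWeaklyMixing

theorem div_three_lt_dist_of_mem_ball {X : Type*} [PseudoMetricSpace X] {a b u v : X}
    (hu : u ∈ Metric.ball a (dist a b / 3)) (hv : v ∈ Metric.ball b (dist a b / 3)) :
    dist a b / 3 < dist u v := by
  rw [Metric.mem_ball] at hu hv
  linarith [dist_triangle4 a u v b, dist_comm a u]

theorem finitely_generated_weaklyMixing_thickly_sensitive_general {X : Type*} [MetricSpace X]
    [Nontrivial X] (f : ℕ → X → X) (hf : ∀ n, Continuous (f n))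
    (hc : ∀ i j, f i ∘ f j = f j ∘ f i)
    (hfin : ∃ S : Set (X → X), S.Finite ∧ ∀ n, f n ∈ S)
    (hsurj : ∀ n, Function.Surjective (f n)) (h : NAWeaklyMixing f) :
    ∃ δ : ℝ, 0 < δ ∧ ∀ U : Set X, IsOpen U → U.Nonempty → ThickSet (NSet f U δ) := by
  classical
  obtain ⟨a, b, hab⟩ := exists_pair_ne X
  have hδ : 0 < dist a b / 3 := by have := dist_pos.2 hab; positivity
  refine ⟨dist a b / 3, hδ, fun U hU hUne p => ?_⟩
  obtain ⟨S, hS, hfS⟩ := hfin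
  set B := ⋃ j ∈ Iic p, range fun n => blockC f n j
  have hB : B.Finite := (finite_Iic p).biUnion fun j _ => finite_range_blockC f hS hfS j
  have hBmaps : ∀ q ∈ hB.toFinset ×ˢ {a, b}, Continuous q.1 ∧ Function.Surjective q.1 := by
    simp only [Finset.mem_product, Finite.mem_toFinset, B, mem_iUnion₂, mem_range]
    rintro ⟨_, _⟩ ⟨⟨j, -, n, rfl⟩, -⟩
    exact ⟨continuous_iterN _ (fun _ => hf _) j, iterN_surjective _ (fun _ => hsurj _) j⟩
  obtain ⟨n, hn, hhit⟩ := h.exists_forall_finset_inter_preimage_nonempty hf hc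
    (hB.toFinset ×ˢ {a, b}) (fun _ => U) (fun q => q.1 ⁻¹' Metric.ball q.2 (dist a b / 3))
    (fun _ _ => hU) (fun q hq => Metric.isOpen_ball.preimage (hBmaps q hq).1)
    (fun _ _ => hUne) (fun q hq => (hBmaps q hq).2.nonempty_preimage.2
      ⟨q.2, Metric.mem_ball_self hδ⟩)
  refine ⟨n, fun j hj => ⟨by omega, ?_⟩⟩
  have hg : blockC f n j ∈ hB.toFinset := by
    simp only [Finite.mem_toFinset, B, mem_iUnion₂, mem_range]
    exact ⟨j, hj, n, rfl⟩
  obtain ⟨x, hxU, hxa⟩ := hhit (blockC f n j, a) (by simp [hg])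
  obtain ⟨y, hyU, hyb⟩ := hhit (blockC f n j, b) (by simp [hg])
  refine ⟨x, hxU, y, hyU, ?_⟩
  rw [iterN_add]
  exact div_three_lt_dist_of_mem_ball hxa hyb

/-- a commutative, finitely generated, surjective, weakly mixing
non-autonomous system on a compact metric space with more than one point is
thickly sensitive. -/
theorem finitely_generated_weaklyMixing_thickly_sensitive {X : Type*} [MetricSpace X]
    [CompactSpace X] [Nontrivial X] (f : ℕ → X → X) (hf : ∀ n, Continuous (f n))
    (hc : ∀ i j, f i ∘ f j = f j ∘ f i)
    (hfin : ∃ S : Set (X → X), S.Finite ∧ ∀ n, f n ∈ S)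
    (hsurj : ∀ n, Function.Surjective (f n)) (h : NAWeaklyMixing f) :
    ∃ δ : ℝ, 0 < δ ∧ ∀ U : Set X, IsOpen U → U.Nonempty → ThickSet (NSet f U δ) :=
  finitely_generated_weaklyMixing_thickly_sensitive_general f hf hc hfin hsurj h
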